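/- arXiv:nlin/0211018 — 4 statements merged into one kernel-verified Lean document; each statement's English description precedes it below -/
import Mathlib

section
/- The trace form tr L = ∫ res_r L dx, where res_r L = u_{r−1}(x), is ad-invariant for the bracket {·,·}_r: for all Laurent series a, b, c, tr({a,b}_r · c) + tr(b · {a,c}_r) = 0 (equivalently, the residue res_r({a,b}_r · c + b · {a,c}_r) is a total x-derivative). -/
open MeasureTheory

/-- Formal Laurent series in `p` whose coefficients are functions of `x`. -/
abbrev LaurentSer := ℤ →₀ (ℝ → ℝ)

/-- The bracket `{L₁,L₂}_r = p^r (∂_p L₁ ∂_x L₂ − ∂_x L₁ ∂_p L₂)`, computed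
coefficientwise. -/
noncomputable def lbr (r : ℤ) (L1 L2 : LaurentSer) : LaurentSer :=
  L1.sum fun i a => L2.sum fun j b =>
    Finsupp.single (i + j + r - 1)
      (fun x => (i : ℝ) * a x * deriv b x - (j : ℝ) * deriv a x * b x)

/-- The commutative multiplication of Laurent series, computed coefficientwise. -/
noncomputable def lmul (L1 L2 : LaurentSer) : LaurentSer :=
  L1.sum fun i a => L2.sum fun j b => Finsupp.single (i + j) (a * b)

/-- The residue `res_r L = u_{r-1}`, the coefficient of `p^{r-1}`. -/
def resr (r : ℤ) (L : LaurentSer) : ℝ → ℝ := L (r - 1)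

/-- Coefficients are smooth, compactly supported functions of `x`. -/
def NiceCoeffs (L : LaurentSer) : Prop :=
  ∀ i : ℤ, ContDiff ℝ (⊤ : ℕ∞) (L i) ∧ HasCompactSupport (L i)

/- ## Auxiliary lemmas -/

lemma deriv_zero_fun : deriv (0 : ℝ → ℝ) = 0 := by
  funext y
  exact deriv_const y 0

lemma int_deriv_zero (f : ℝ → ℝ) (hf : ContDiff ℝ 1 f) (h2f : HasCompactSupport f) :
    ∫ x : ℝ, deriv f x = 0 := by
  have hint : Integrable (deriv f) :=
    ((hf.continuous_deriv le_rfl).integrable_of_hasCompactSupport h2f.deriv)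
  rw [← intervalIntegral.integral_Iic_add_Ioi (b := 0) hint.integrableOn hint.integrableOn,
    h2f.integral_Iic_deriv_eq hf 0, h2f.integral_Ioi_deriv_eq hf 0]
  ring

lemma lmul_apply (L1 L2 : LaurentSer) (n : ℤ) (x : ℝ) :
    lmul L1 L2 n x = ∑ i ∈ L1.support, L1 i x * L2 (n - i) x := by
  simp only [lmul, Finsupp.sum, Finset.sum_apply', Finsupp.single_apply, Finset.sum_apply,
    Pi.mul_apply]
  refine Finset.sum_congr rfl fun i hi => ?_
  rw [Finset.sum_eq_single (n - i)]
  · simp [show i + (n - i) = n by ring]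
  · intro j hj hne
    simp [show ¬ (i + j = n) by omega]
  · intro h
    rw [Finsupp.notMem_support_iff.mp h]
    simp

lemma lmul_comm (L1 L2 : LaurentSer) : lmul L1 L2 = lmul L2 L1 := by
  simp only [lmul]
  rw [Finsupp.sum_comm]
  refine Finsupp.sum_congr fun j hj => Finsupp.sum_congr fun i hi => ?_
  rw [add_comm, mul_comm]

lemma lbr_apply (r : ℤ) (a b : LaurentSer) (n : ℤ) (x : ℝ) :
    lbr r a b n x = ∑ i ∈ a.support,
      ((i : ℝ) * a i x * deriv (b (n + 1 - r - i)) x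
        - ((n + 1 - r - i : ℤ) : ℝ) * deriv (a i) x * b (n + 1 - r - i) x) := by
  simp only [lbr, Finsupp.sum, Finset.sum_apply', Finsupp.single_apply, Finset.sum_apply]
  refine Finset.sum_congr rfl fun i hi => ?_
  rw [Finset.sum_eq_single (n + 1 - r - i)]
  · simp [show i + (n + 1 - r - i) + r - 1 = n by ring]
  · intro j hj hne
    simp [show ¬ (i + j + r - 1 = n) by omega]
  · intro h
    rw [Finsupp.notMem_support_iff.mp h]
    simp [deriv_zero_fun]

/-- First summand: coefficient of the term `{a,b}_r ⬝ c`. -/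
noncomputable def T1 (a b c : LaurentSer) (i j : ℤ) : ℝ → ℝ := fun x =>
  c (-i - j) x * ((i : ℝ) * a i x * deriv (b j) x - (j : ℝ) * deriv (a i) x * b j x)

/-- Index set for the combined double sum. -/
def Sset (b c : LaurentSer) (i : ℤ) : Finset ℤ :=
  b.support ∪ c.support.image (fun m => -m - i)

lemma bsupp_subset (b c : LaurentSer) (i : ℤ) : b.support ⊆ Sset b c i :=
  Finset.subset_union_left

lemma image_subset (b c : LaurentSer) (i : ℤ) :
    c.support.image (fun m => -m - i) ⊆ Sset b c i :=
  Finset.subset_union_right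

/-- Second summand: coefficient of the term `b ⬝ {a,c}_r`. -/
noncomputable def T2 (a b c : LaurentSer) (i j : ℤ) : ℝ → ℝ := fun x =>
  b j x * ((i : ℝ) * a i x * deriv (c (-i - j)) x
    - ((-i - j : ℤ) : ℝ) * deriv (a i) x * c (-i - j) x)

/-- The trace form `tr L = ∫ res_r L dx` is ad-invariant for `{·,·}_r`:
`tr({a,b}_r · c) + tr(b · {a,c}_r) = 0`. -/
theorem trace_ad_invariant (r : ℤ) (a b c : LaurentSer)
    (ha : NiceCoeffs a) (hb : NiceCoeffs b) (hc : NiceCoeffs c) :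
    (∫ x : ℝ, resr r (lmul (lbr r a b) c) x) + (∫ x : ℝ, resr r (lmul b (lbr r a c)) x) = 0 := by
  classical
  -- pointwise formula for the first integrand
  have f1eq : ∀ x : ℝ, resr r (lmul (lbr r a b) c) x
      = ∑ i ∈ a.support, ∑ j ∈ Sset b c i, T1 a b c i j x := by
    intro x
    rw [resr, lmul_comm, lmul_apply]
    calc ∑ m ∈ c.support, c m x * lbr r a b (r - 1 - m) x
        = ∑ m ∈ c.support, ∑ i ∈ a.support,
            c m x * ((i : ℝ) * a i x * deriv (b (-m - i)) x
              - ((-m - i : ℤ) : ℝ) * deriv (a i) x * b (-m - i) x) := by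
          refine Finset.sum_congr rfl fun m hm => ?_
          rw [lbr_apply, Finset.mul_sum]
          refine Finset.sum_congr rfl fun i hi => ?_
          rw [show r - 1 - m + 1 - r - i = -m - i by ring]
      _ = ∑ i ∈ a.support, ∑ m ∈ c.support,
            c m x * ((i : ℝ) * a i x * deriv (b (-m - i)) x
              - ((-m - i : ℤ) : ℝ) * deriv (a i) x * b (-m - i) x) := Finset.sum_comm
      _ = ∑ i ∈ a.support, ∑ j ∈ c.support.image (fun m => -m - i), T1 a b c i j x := by
          refine Finset.sum_congr rfl fun i hi => ?_
          rw [Finset.sum_image (by intro m _ m' _ h; have h' : -m - i = -m' - i := h; omega)]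
          refine Finset.sum_congr rfl fun m hm => ?_
          simp only [T1]
          rw [show -i - (-m - i) = m by ring]
      _ = ∑ i ∈ a.support, ∑ j ∈ Sset b c i, T1 a b c i j x := by
          refine Finset.sum_congr rfl fun i hi => ?_
          refine Finset.sum_subset (image_subset b c i) ?_
          intro j hj hnj
          have hcz : c (-i - j) = 0 := by
            rw [← Finsupp.notMem_support_iff]
            intro hmem
            exact hnj (Finset.mem_image.mpr ⟨-i - j, hmem, by ring⟩)
          simp [T1, hcz]
  -- pointwise formula for the second integrand
  have f2eq : ∀ x : ℝ, resr r (lmul b (lbr r a c)) x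
      = ∑ i ∈ a.support, ∑ j ∈ Sset b c i, T2 a b c i j x := by
    intro x
    rw [resr, lmul_apply]
    calc ∑ j ∈ b.support, b j x * lbr r a c (r - 1 - j) x
        = ∑ j ∈ b.support, ∑ i ∈ a.support, T2 a b c i j x := by
          refine Finset.sum_congr rfl fun j hj => ?_
          rw [lbr_apply, Finset.mul_sum]
          refine Finset.sum_congr rfl fun i hi => ?_
          simp only [T2]
          rw [show r - 1 - j + 1 - r - i = -i - j by ring]
      _ = ∑ i ∈ a.support, ∑ j ∈ b.support, T2 a b c i j x := Finset.sum_comm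
      _ = ∑ i ∈ a.support, ∑ j ∈ Sset b c i, T2 a b c i j x := by
          refine Finset.sum_congr rfl fun i hi => ?_
          refine Finset.sum_subset (bsupp_subset b c i) ?_
          intro j hj hnj
          have hbz : b j = 0 := Finsupp.notMem_support_iff.mp hnj
          simp [T2, hbz]
  -- integrability of the summands
  have hint1 : ∀ i j : ℤ, Integrable (T1 a b c i j) := by
    intro i j
    have hcont : Continuous (T1 a b c i j) :=
      ((hc _).1.continuous).mul
        (((continuous_const.mul (ha i).1.continuous).mul ((hb j).1.continuous_deriv (by simp))).sub
          ((continuous_const.mul ((ha i).1.continuous_deriv (by simp))).mul (hb j).1.continuous))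
    refine hcont.integrable_of_hasCompactSupport (HasCompactSupport.intro (ha i).2 ?_)
    intro x hx
    have h1 : a i x = 0 := image_eq_zero_of_notMem_tsupport hx
    have h2 : deriv (a i) x = 0 := by
      by_contra h
      exact hx (support_deriv_subset (by simpa using h))
    simp [T1, h1, h2]
  have hint2 : ∀ i j : ℤ, Integrable (T2 a b c i j) := by
    intro i j
    have hcont : Continuous (T2 a b c i j) :=
      ((hb j).1.continuous).mul
        (((continuous_const.mul (ha i).1.continuous).mul ((hc _).1.continuous_deriv (by simp))).sub
          ((continuous_const.mul ((ha i).1.continuous_deriv (by simp))).mul (hc _).1.continuous))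
    refine hcont.integrable_of_hasCompactSupport (HasCompactSupport.intro (ha i).2 ?_)
    intro x hx
    have h1 : a i x = 0 := image_eq_zero_of_notMem_tsupport hx
    have h2 : deriv (a i) x = 0 := by
      by_contra h
      exact hx (support_deriv_subset (by simpa using h))
    simp [T2, h1, h2]
  -- each paired integral vanishes
  have key : ∀ i j : ℤ, (∫ x : ℝ, T1 a b c i j x) + (∫ x : ℝ, T2 a b c i j x) = 0 := by
    intro i j
    rw [← integral_add (hint1 i j) (hint2 i j)]
    have da : Differentiable ℝ (a i) := (ha i).1.differentiable (by simp)
    have db : Differentiable ℝ (b j) := (hb j).1.differentiable (by simp)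
    have dc : Differentiable ℝ (c (-i - j)) := (hc _).1.differentiable (by simp)
    have hsum : ∀ x : ℝ, T1 a b c i j x + T2 a b c i j x
        = (i : ℝ) * deriv (fun y => a i y * (b j y * c (-i - j) y)) x := by
      intro x
      rw [deriv_fun_mul (d := fun y => b j y * c (-i - j) y) (da x) ((db x).mul (dc x)), deriv_fun_mul (db x) (dc x)]
      simp only [T1, T2]
      push_cast
      ring
    simp only [hsum]
    rw [MeasureTheory.integral_const_mul]
    have hP1 : ContDiff ℝ 1 (fun y => a i y * (b j y * c (-i - j) y)) :=
      ((ha i).1.mul ((hb j).1.mul (hc _).1)).of_le (by simp)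
    have hP2 : HasCompactSupport (fun y => a i y * (b j y * c (-i - j) y)) := by
      refine HasCompactSupport.intro (ha i).2 ?_
      intro x hx
      simp [image_eq_zero_of_notMem_tsupport hx]
    rw [int_deriv_zero _ hP1 hP2, mul_zero]
  -- assemble
  simp only [f1eq, f2eq]
  rw [integral_finset_sum _ (fun i _ => integrable_finset_sum _ (fun j _ => hint1 i j)),
    integral_finset_sum _ (fun i _ => integrable_finset_sum _ (fun j _ => hint2 i j))]
  rw [← Finset.sum_add_distrib]
  refine Finset.sum_eq_zero fun i _ => ?_
  rw [integral_finset_sum _ (fun j _ => hint1 i j), integral_finset_sum _ (fun j _ => hint2 i j),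
    ← Finset.sum_add_distrib]
  exact Finset.sum_eq_zero fun j _ => key i j
end

section
/- If C_i and C_j are Casimir functionals of the centrally extended Lie–Poisson bracket, i.e. their gradients satisfy [dC, L] + (dC)_y = 0, then they are in involution with respect to the linear R-bracket: (L,[dC_j,dC_i]_R) + ω₂(RdC_j,dC_i) + ω₂(dC_j,RdC_i) = 0. -/
/-- If the gradients `a = dC_i`, `b = dC_j` of two Casimir functionals of the centrally
extended Lie–Poisson bracket satisfy the Novikov–Lax equations `[a,L] + a_y = 0` and
`[b,L] + b_y = 0`, then the Casimirs are in involution with respect to the linear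
R-bracket: `(L,[b,a]_R) + ω₂(Rb,a) + ω₂(b,Ra) = 0`, where `ω₂(x,z) = (x, Dy z)`. -/
theorem casimirs_in_involution {A : Type*} [LieRing A] [LieAlgebra ℝ A]
    (B : A →ₗ[ℝ] A →ₗ[ℝ] ℝ) (Dy R Rs : A →ₗ[ℝ] A)
    (hsym : ∀ a b : A, B a b = B b a)
    (hadi : ∀ a b c : A, B ⁅a, b⁆ c + B b ⁅a, c⁆ = 0)
    (hder : ∀ a b : A, Dy ⁅a, b⁆ = ⁅Dy a, b⁆ + ⁅a, Dy b⁆)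
    (hskewD : ∀ a b : A, B a (Dy b) = - B (Dy a) b)
    (hadj : ∀ a b : A, B a (R b) = B (Rs a) b)
    (L a b : A)
    (ha : ⁅a, L⁆ + Dy a = 0) (hb : ⁅b, L⁆ + Dy b = 0) :
    B L (⁅R b, a⁆ + ⁅b, R a⁆) + B (R b) (Dy a) + B b (Dy (R a)) = 0 := by
  have hDa : Dy a = ⁅L, a⁆ := by
    rw [← lie_skew]; exact eq_neg_of_add_eq_zero_right ha
  have hDb : Dy b = ⁅L, b⁆ := by
    rw [← lie_skew]; exact eq_neg_of_add_eq_zero_right hb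
  have h1 := hadi (R b) L a
  have h2 := hadi L (R b) a
  have h3 := hadi b L (R a)
  have h4 := hskewD b (R a)
  rw [map_add, hDa, h4, hDb]
  have hs : (⁅L, R b⁆ : A) = -⁅R b, L⁆ := neg_eq_iff_eq_neg.mp (lie_skew (R b) L)
  rw [hs] at h2
  simp only [map_neg, LinearMap.neg_apply] at h2
  rw [show (⁅L, b⁆ : A) = -⁅b, L⁆ from neg_eq_iff_eq_neg.mp (lie_skew b L)]
  simp only [map_neg, LinearMap.neg_apply]
  linarith [h1, h2, h3]
end

section
/- Under the transformation x' = x, y' = −y, p' = p^{−1}, q' = q, the extended bracket transforms as {A,B}_r = −{A',B'}'_{2−r}: that is, p^r(∂_p A ∂_x B − ∂_x A ∂_p B) + ∂_q A ∂_y B − ∂_y A ∂_q B equals minus the same expression computed in the primed variables with r replaced by r' = 2 − r. -/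
/-- The extended bracket
`{A,B}_r = p^r(∂_p A ∂_x B − ∂_x A ∂_p B) + ∂_q A ∂_y B − ∂_y A ∂_q B`
for functions of the variables `(p, x, y, q)`. -/
noncomputable def xbr (r : ℤ) (F G : ℝ → ℝ → ℝ → ℝ → ℝ) (p x y q : ℝ) : ℝ :=
  p ^ r * (deriv (fun t => F t x y q) p * deriv (fun t => G p t y q) x
         - deriv (fun t => F p t y q) x * deriv (fun t => G t x y q) p)
  + deriv (fun t => F p x y t) q * deriv (fun t => G p x t q) y
  - deriv (fun t => F p x t q) y * deriv (fun t => G p x y t) q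

/-- The primed version of a function: `x' = x`, `y' = −y`, `p' = p⁻¹`, `q' = q`. -/
noncomputable def primed (F : ℝ → ℝ → ℝ → ℝ → ℝ) : ℝ → ℝ → ℝ → ℝ → ℝ :=
  fun p' x y' q => F p'⁻¹ x (-y') q

lemma aux_inv {f : ℝ → ℝ} {p : ℝ} (hf : DifferentiableAt ℝ f p) (hp : p ≠ 0) :
    deriv (fun t => f t⁻¹) p⁻¹ = -p ^ 2 * deriv f p := by
  have h1 : HasDerivAt (fun t : ℝ => t⁻¹) (-((p⁻¹) ^ 2)⁻¹) p⁻¹ :=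
    hasDerivAt_inv (inv_ne_zero hp)
  have h2 : HasDerivAt f (deriv f p) ((p⁻¹)⁻¹) := by
    rw [inv_inv]; exact hf.hasDerivAt
  have h := (h2.comp p⁻¹ h1).deriv
  rw [show (fun t : ℝ => f t⁻¹) = f ∘ (fun t : ℝ => t⁻¹) from rfl, h]
  field_simp

/-- Under the transformation `x' = x, y' = −y, p' = p⁻¹, q' = q` the extended bracket
transforms as `{A,B}_r = −{A',B'}'_{2−r}`. -/
theorem bracket_transformation (r : ℤ) (F G : ℝ → ℝ → ℝ → ℝ → ℝ)
    (hF : ContDiff ℝ (⊤ : ℕ∞) (fun v : ℝ × ℝ × ℝ × ℝ => F v.1 v.2.1 v.2.2.1 v.2.2.2))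
    (hG : ContDiff ℝ (⊤ : ℕ∞) (fun v : ℝ × ℝ × ℝ × ℝ => G v.1 v.2.1 v.2.2.1 v.2.2.2)) :
    ∀ p x y q : ℝ, p ≠ 0 →
      xbr r F G p x y q = - xbr (2 - r) (primed F) (primed G) p⁻¹ x (-y) q := by
  intro p x y q hp
  have hFd := hF.differentiable (by simp)
  have hGd := hG.differentiable (by simp)
  have hF1 : DifferentiableAt ℝ (fun t => F t x y q) p := by
    exact (hFd.comp (by fun_prop : Differentiable ℝ
      (fun t : ℝ => ((t, x, y, q) : ℝ × ℝ × ℝ × ℝ)))) p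
  have hG1 : DifferentiableAt ℝ (fun t => G t x y q) p := by
    exact (hGd.comp (by fun_prop : Differentiable ℝ
      (fun t : ℝ => ((t, x, y, q) : ℝ × ℝ × ℝ × ℝ)))) p
  simp only [xbr, primed, inv_inv, neg_neg]
  rw [aux_inv hF1 hp, aux_inv hG1 hp,
    deriv_comp_neg (f := fun t => F p x t q), deriv_comp_neg (f := fun t => G p x t q),
    neg_neg]
  have hc : (p⁻¹ : ℝ) ^ (2 - r) * p ^ (2 : ℕ) = p ^ r := by
    rw [inv_zpow, ← zpow_neg, ← zpow_natCast p 2, ← zpow_add₀ hp]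
    norm_num
  linear_combination (-1 : ℝ) *
    (deriv (fun t => F t x y q) p * deriv (fun t => G p t y q) x
      - deriv (fun t => F p t y q) x * deriv (fun t => G t x y q) p) * hc
end

section
/- For the Lax operator ℒ = p³ + u p + v − q and the bracket {A,B}₀ = ∂_p A ∂_x B − ∂_x A ∂_p B + ∂_q A ∂_y B − ∂_y A ∂_q B, the flow ℒ_{t₂} = {p² + (2/3)u, ℒ}₀ gives the system u_{t₂} = 2 v_x, v_{t₂} = −(2/3) u u_x + (2/3) u_y; eliminating v yields the (2+1)-dimensional dispersionless Boussinesq equation u_{tt} = (4/3) u_{xy} − (2/3)(u²)_{xx}. -/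
private def unc (f : ℝ → ℝ → ℝ → ℝ) : ℝ × ℝ × ℝ → ℝ := fun w => f w.1 w.2.1 w.2.2

private lemma lineX (y t : ℝ) (x : ℝ) :
    HasDerivAt (fun a : ℝ => ((a, y, t) : ℝ × ℝ × ℝ)) (1, 0, 0) x :=
  (hasDerivAt_id x).prodMk ((hasDerivAt_const x y).prodMk (hasDerivAt_const x t))

private lemma lineY (x t : ℝ) (y : ℝ) :
    HasDerivAt (fun b : ℝ => ((x, b, t) : ℝ × ℝ × ℝ)) (0, 1, 0) y :=
  (hasDerivAt_const y x).prodMk ((hasDerivAt_id y).prodMk (hasDerivAt_const y t))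

private lemma lineT (x y : ℝ) (t : ℝ) :
    HasDerivAt (fun s : ℝ => ((x, y, s) : ℝ × ℝ × ℝ)) (0, 0, 1) t :=
  (hasDerivAt_const t x).prodMk ((hasDerivAt_const t y).prodMk (hasDerivAt_id t))

private lemma pd1 {f : ℝ × ℝ × ℝ → ℝ} (hf : Differentiable ℝ f) (x y t : ℝ) :
    HasDerivAt (fun a => f (a, y, t)) (fderiv ℝ f (x, y, t) (1, 0, 0)) x :=
  ((hf _).hasFDerivAt.comp_hasDerivAt x (lineX y t x))

private lemma pd2 {f : ℝ × ℝ × ℝ → ℝ} (hf : Differentiable ℝ f) (x y t : ℝ) :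
    HasDerivAt (fun b => f (x, b, t)) (fderiv ℝ f (x, y, t) (0, 1, 0)) y :=
  ((hf _).hasFDerivAt.comp_hasDerivAt y (lineY x t y))

private lemma pd3 {f : ℝ × ℝ × ℝ → ℝ} (hf : Differentiable ℝ f) (x y t : ℝ) :
    HasDerivAt (fun s => f (x, y, s)) (fderiv ℝ f (x, y, t) (0, 0, 1)) t :=
  ((hf _).hasFDerivAt.comp_hasDerivAt t (lineT x y t))

private lemma pdF1 {f : ℝ × ℝ × ℝ → ℝ} (hf : ContDiff ℝ (⊤ : ℕ∞) f) (d : ℝ × ℝ × ℝ) (x y t : ℝ) :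
    HasDerivAt (fun a => fderiv ℝ f (a, y, t) d)
      (fderiv ℝ (fderiv ℝ f) (x, y, t) (1, 0, 0) d) x := by
  have hF : Differentiable ℝ (fderiv ℝ f) :=
    (hf.fderiv_right (m := 1) (by norm_cast)).differentiable one_ne_zero
  have h := ((hF _).hasFDerivAt.comp_hasDerivAt x (lineX y t x)).clm_apply
    (hasDerivAt_const x d)
  simpa using h

private lemma pdF3 {f : ℝ × ℝ × ℝ → ℝ} (hf : ContDiff ℝ (⊤ : ℕ∞) f) (d : ℝ × ℝ × ℝ) (x y t : ℝ) :
    HasDerivAt (fun s => fderiv ℝ f (x, y, s) d)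
      (fderiv ℝ (fderiv ℝ f) (x, y, t) (0, 0, 1) d) t := by
  have hF : Differentiable ℝ (fderiv ℝ f) :=
    (hf.fderiv_right (m := 1) (by norm_cast)).differentiable one_ne_zero
  have h := ((hF _).hasFDerivAt.comp_hasDerivAt t (lineT x y t)).clm_apply
    (hasDerivAt_const t d)
  simpa using h

private lemma clairaut {f : ℝ × ℝ × ℝ → ℝ} (hf : ContDiff ℝ (⊤ : ℕ∞) f) (w d1 d2 : ℝ × ℝ × ℝ) :
    fderiv ℝ (fderiv ℝ f) w d1 d2 = fderiv ℝ (fderiv ℝ f) w d2 d1 :=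
  second_derivative_symmetric
    (fun z => ((hf.differentiable (by simp)) z).hasFDerivAt)
    (((hf.fderiv_right (m := 1) (by norm_cast)).differentiable one_ne_zero) w).hasFDerivAt d1 d2

/-- For the Lax operator `ℒ = p³ + u p + v − q` and the extended bracket
`{A,B}₀ = ∂_p A ∂_x B − ∂_x A ∂_p B + ∂_q A ∂_y B − ∂_y A ∂_q B`, the flow
`ℒ_{t₂} = {p² + (2/3)u, ℒ}₀` gives the system
`u_{t₂} = 2 v_x`, `v_{t₂} = −(2/3) u u_x + (2/3) u_y`; eliminating `v` yields the
(2+1)-dimensional dispersionless Boussinesq equation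
`u_{tt} = (4/3) u_{xy} − (2/3)(u²)_{xx}`. -/
theorem dispersionless_boussinesq (u v : ℝ → ℝ → ℝ → ℝ)
    (hu : ContDiff ℝ (⊤ : ℕ∞) (fun w : ℝ × ℝ × ℝ => u w.1 w.2.1 w.2.2))
    (hv : ContDiff ℝ (⊤ : ℕ∞) (fun w : ℝ × ℝ × ℝ => v w.1 w.2.1 w.2.2))
    (hLax : ∀ p x y q t : ℝ,
      deriv (fun s => p ^ 3 + u x y s * p + v x y s - q) t =
        deriv (fun a => a ^ 2 + 2 / 3 * u x y t) p
          * deriv (fun a => p ^ 3 + u a y t * p + v a y t - q) x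
        - deriv (fun a => p ^ 2 + 2 / 3 * u a y t) x
          * deriv (fun a => a ^ 3 + u x y t * a + v x y t - q) p
        + deriv (fun a => p ^ 2 + 2 / 3 * u x y t) q
          * deriv (fun a => p ^ 3 + u x a t * p + v x a t - q) y
        - deriv (fun a => p ^ 2 + 2 / 3 * u x a t) y
          * deriv (fun a => p ^ 3 + u x y t * p + v x y t - a) q) :
    (∀ x y t : ℝ,
      deriv (fun s => u x y s) t = 2 * deriv (fun a => v a y t) x ∧
      deriv (fun s => v x y s) t
        = -(2 / 3) * u x y t * deriv (fun a => u a y t) x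
          + 2 / 3 * deriv (fun b => u x b t) y) ∧
    (∀ x y t : ℝ,
      deriv (fun s => deriv (fun s' => u x y s') s) t
        = 4 / 3 * deriv (fun a => deriv (fun b => u a b t) y) x
          - 2 / 3 * deriv (fun a => deriv (fun b => (u b y t) ^ 2) a) x) := by
  have hU : ContDiff ℝ (⊤ : ℕ∞) (unc u) := hu
  have hV : ContDiff ℝ (⊤ : ℕ∞) (unc v) := hv
  have hUd : Differentiable ℝ (unc u) := hU.differentiable (by simp)
  have hVd : Differentiable ℝ (unc v) := hV.differentiable (by simp)
  -- the key polynomial identity in p extracted from the Lax equation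
  have key : ∀ p x y t : ℝ,
      fderiv ℝ (unc u) (x, y, t) (0, 0, 1) * p + fderiv ℝ (unc v) (x, y, t) (0, 0, 1) =
        2 * p * (fderiv ℝ (unc u) (x, y, t) (1, 0, 0) * p
            + fderiv ℝ (unc v) (x, y, t) (1, 0, 0))
          - 2 / 3 * fderiv ℝ (unc u) (x, y, t) (1, 0, 0) * (3 * p ^ 2 + u x y t)
          + 2 / 3 * fderiv ℝ (unc u) (x, y, t) (0, 1, 0) := by
    intro p x y t
    have hp := hLax p x y 0 t
    have d0 : HasDerivAt (fun s => p ^ 3 + u x y s * p + v x y s - (0 : ℝ))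
        (0 + fderiv ℝ (unc u) (x, y, t) (0, 0, 1) * p + fderiv ℝ (unc v) (x, y, t) (0, 0, 1)) t :=
      (((hasDerivAt_const t (p ^ 3)).add ((pd3 hUd x y t).mul_const p)).add
        (pd3 hVd x y t)).sub_const 0
    have d1 : HasDerivAt (fun a : ℝ => a ^ 2 + 2 / 3 * u x y t)
        ((2 : ℕ) * p ^ (2 - 1)) p := (hasDerivAt_pow 2 p).add_const _
    have d2 : HasDerivAt (fun a => p ^ 3 + u a y t * p + v a y t - (0 : ℝ))
        (0 + fderiv ℝ (unc u) (x, y, t) (1, 0, 0) * p + fderiv ℝ (unc v) (x, y, t) (1, 0, 0)) x :=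
      (((hasDerivAt_const x (p ^ 3)).add ((pd1 hUd x y t).mul_const p)).add
        (pd1 hVd x y t)).sub_const 0
    have d3 : HasDerivAt (fun a => p ^ 2 + 2 / 3 * u a y t)
        (0 + 2 / 3 * fderiv ℝ (unc u) (x, y, t) (1, 0, 0)) x :=
      (hasDerivAt_const x (p ^ 2)).add ((pd1 hUd x y t).const_mul (2 / 3))
    have d4 : HasDerivAt (fun a : ℝ => a ^ 3 + u x y t * a + v x y t - (0 : ℝ))
        ((3 : ℕ) * p ^ (3 - 1) + u x y t * 1 + 0) p :=
      (((hasDerivAt_pow 3 p).add ((hasDerivAt_id p).const_mul (u x y t))).add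
        (hasDerivAt_const p (v x y t))).sub_const 0
    have d5 : deriv (fun _ : ℝ => p ^ 2 + 2 / 3 * u x y t) 0 = 0 :=
      (hasDerivAt_const (0 : ℝ) _).deriv
    have d6 : HasDerivAt (fun a => p ^ 2 + 2 / 3 * u x a t)
        (0 + 2 / 3 * fderiv ℝ (unc u) (x, y, t) (0, 1, 0)) y :=
      (hasDerivAt_const y (p ^ 2)).add ((pd2 hUd x y t).const_mul (2 / 3))
    have d7 : HasDerivAt (fun a : ℝ => p ^ 3 + u x y t * p + v x y t - a) (0 - 1) 0 :=
      (hasDerivAt_const (0 : ℝ) _).sub (hasDerivAt_id 0)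
    rw [d0.deriv, d1.deriv, d2.deriv, d3.deriv, d4.deriv, d5, d6.deriv, d7.deriv] at hp
    push_cast at hp
    linear_combination hp
  have main1 : ∀ x y t : ℝ,
      deriv (fun s => u x y s) t = 2 * deriv (fun a => v a y t) x ∧
      deriv (fun s => v x y s) t
        = -(2 / 3) * u x y t * deriv (fun a => u a y t) x
          + 2 / 3 * deriv (fun b => u x b t) y := by
    intro x y t
    have eU3 : deriv (fun s => u x y s) t = fderiv ℝ (unc u) (x, y, t) (0, 0, 1) :=
      (pd3 hUd x y t).deriv
    have eV3 : deriv (fun s => v x y s) t = fderiv ℝ (unc v) (x, y, t) (0, 0, 1) :=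
      (pd3 hVd x y t).deriv
    have eU1 : deriv (fun a => u a y t) x = fderiv ℝ (unc u) (x, y, t) (1, 0, 0) :=
      (pd1 hUd x y t).deriv
    have eV1 : deriv (fun a => v a y t) x = fderiv ℝ (unc v) (x, y, t) (1, 0, 0) :=
      (pd1 hVd x y t).deriv
    have eU2 : deriv (fun b => u x b t) y = fderiv ℝ (unc u) (x, y, t) (0, 1, 0) :=
      (pd2 hUd x y t).deriv
    constructor
    · rw [eU3, eV1]
      linear_combination (key 1 x y t) - (key 0 x y t)
    · rw [eV3, eU1, eU2]
      linear_combination key 0 x y t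
  refine ⟨main1, ?_⟩
  intro x y t
  have lhs1 : (fun s => deriv (fun s' => u x y s') s)
      = fun s => 2 * fderiv ℝ (unc v) (x, y, s) (1, 0, 0) := by
    funext s
    have e : deriv (fun a => v a y s) x = fderiv ℝ (unc v) (x, y, s) (1, 0, 0) :=
      (pd1 hVd x y s).deriv
    rw [(main1 x y s).1, e]
  rw [lhs1, ((pdF3 hV ((1 : ℝ), (0 : ℝ), (0 : ℝ)) x y t).const_mul 2).deriv,
    clairaut hV (x, y, t) (0, 0, 1) (1, 0, 0),
    ← (pdF1 hV ((0 : ℝ), (0 : ℝ), (1 : ℝ)) x y t).deriv]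
  have integ : (fun a => fderiv ℝ (unc v) (a, y, t) (0, 0, 1))
      = fun a => -(2 / 3) * (u a y t * fderiv ℝ (unc u) (a, y, t) (1, 0, 0))
          + 2 / 3 * fderiv ℝ (unc u) (a, y, t) (0, 1, 0) := by
    funext a
    have eV : deriv (fun s => v a y s) t = fderiv ℝ (unc v) (a, y, t) (0, 0, 1) :=
      (pd3 hVd a y t).deriv
    have e1 : deriv (fun b => u b y t) a = fderiv ℝ (unc u) (a, y, t) (1, 0, 0) :=
      (pd1 hUd a y t).deriv
    have e2 : deriv (fun b => u a b t) y = fderiv ℝ (unc u) (a, y, t) (0, 1, 0) :=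
      (pd2 hUd a y t).deriv
    rw [← eV, (main1 a y t).2, e1, e2]
    ring
  rw [integ]
  have hg1 : HasDerivAt (fun a => u a y t * fderiv ℝ (unc u) (a, y, t) (1, 0, 0))
      (fderiv ℝ (unc u) (x, y, t) (1, 0, 0) * fderiv ℝ (unc u) (x, y, t) (1, 0, 0)
        + u x y t * fderiv ℝ (fderiv ℝ (unc u)) (x, y, t) (1, 0, 0) (1, 0, 0)) x :=
    (pd1 hUd x y t).mul (pdF1 hU ((1 : ℝ), (0 : ℝ), (0 : ℝ)) x y t)
  rw [(show HasDerivAt (fun a => -(2 / 3) * (u a y t * fderiv ℝ (unc u) (a, y, t) (1, 0, 0))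
      + 2 / 3 * fderiv ℝ (unc u) (a, y, t) (0, 1, 0)) _ x from (hg1.const_mul (-(2 / 3))).add
    ((pdF1 hU ((0 : ℝ), (1 : ℝ), (0 : ℝ)) x y t).const_mul (2 / 3))).deriv]
  have r1 : (fun a => deriv (fun b => u a b t) y)
      = fun a => fderiv ℝ (unc u) (a, y, t) (0, 1, 0) := by
    funext a
    exact (pd2 hUd a y t).deriv
  have r2 : (fun a => deriv (fun b => (u b y t) ^ 2) a)
      = fun a => 2 * (u a y t * fderiv ℝ (unc u) (a, y, t) (1, 0, 0)) := by
    funext a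
    have e : deriv (fun b => (u b y t) ^ 2) a
        = 2 * u a y t ^ (2 - 1) * fderiv ℝ (unc u) (a, y, t) (1, 0, 0) := by
      have h : HasDerivAt (fun b => (u b y t) ^ 2)
          ((2 : ℕ) * u a y t ^ (2 - 1) * fderiv ℝ (unc u) (a, y, t) (1, 0, 0)) a :=
        (pd1 hUd a y t).pow 2
      simpa using h.deriv
    rw [e]
    push_cast
    ring
  rw [r1, r2, (hg1.const_mul 2).deriv,
    (pdF1 hU ((0 : ℝ), (1 : ℝ), (0 : ℝ)) x y t).deriv]
  ring
end
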